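/- For two gradings A^{(θ_1)}, A^{(θ_2)} on a finite dimensional algebra A given by bialgebra maps θ_1, θ_2 : a(A) → k[G], and for an invertible group-like element g of a(A)^o with associated automorphism w_g(e_i) = Σ_s g(x_{si}) e_s, the automorphism w_g is a morphism of right k[G]-comodules from (A, ρ^{(θ_1)}) to (A, ρ^{(θ_2)}) if and only if g ⋆ θ_1 = θ_2 ⋆ g in the convolution algebra Hom(a(A), k[G]). -/

import Mathlib

open TensorProduct

noncomputable section

variable (k : Type) [Field k]

/-- The relations defining the quantum symmetry semigroup `a(A)` of a finite dimensional
algebra `A` with basis `e` (with `e 0 = 1`), in terms of the structure constants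
`τ i j s = e.repr (e i * e j) s`. -/
inductive ARel {A : Type} [Ring A] [Algebra k A] {n : ℕ} [NeZero n]
    (e : Module.Basis (Fin n) k A) :
    FreeAlgebra k (Fin n × Fin n) → FreeAlgebra k (Fin n × Fin n) → Prop
  | mul (a i j : Fin n) :
      ARel e (∑ u, e.repr (e i * e j) u • FreeAlgebra.ι k (a, u))
        (∑ s, ∑ t, e.repr (e s * e t) a • (FreeAlgebra.ι k (s, i) * FreeAlgebra.ι k (t, j)))
  | unit (a : Fin n) :
      ARel e (FreeAlgebra.ι k (a, (0 : Fin n))) (if a = 0 then 1 else 0)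

/-- The quantum symmetry semigroup `a(A)`. -/
abbrev aA {A : Type} [Ring A] [Algebra k A] {n : ℕ} [NeZero n] (e : Module.Basis (Fin n) k A) :=
  RingQuot (ARel k e)

/-- The generators `x_{s i}` of `a(A)`. -/
def xg {A : Type} [Ring A] [Algebra k A] {n : ℕ} [NeZero n] (e : Module.Basis (Fin n) k A)
    (s i : Fin n) : aA k e :=
  RingQuot.mkAlgHom k (ARel k e) (FreeAlgebra.ι k (s, i))

/-- The canonical map `η_A : A → A ⊗ a(A)`, `e i ↦ ∑ s, e s ⊗ x_{s i}`, as a linear map. -/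
def etaA {A : Type} [Ring A] [Algebra k A] {n : ℕ} [NeZero n] (e : Module.Basis (Fin n) k A) :
    A →ₗ[k] A ⊗[k] aA k e :=
  (e.constr k) fun i => ∑ s, e s ⊗ₜ[k] xg k e s i


/-- The comultiplication of the group bialgebra `k[G]`, determined by `Δ(g) = g ⊗ g`. -/
def gComul (G : Type) [Group G] :
    MonoidAlgebra k G →ₐ[k] MonoidAlgebra k G ⊗[k] MonoidAlgebra k G :=
  MonoidAlgebra.lift k _ G
    { toFun := fun g => MonoidAlgebra.of k G g ⊗ₜ[k] MonoidAlgebra.of k G g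
      map_one' := by simp [Algebra.TensorProduct.one_def, MonoidAlgebra.one_def]
      map_mul' := by intro g h; simp [Algebra.TensorProduct.tmul_mul_tmul] }

/-- The counit of the group bialgebra `k[G]`, determined by `ε(g) = 1`. -/
def gCounit (G : Type) [Group G] : MonoidAlgebra k G →ₐ[k] k :=
  MonoidAlgebra.lift k k G 1

variable {A : Type} [Ring A] [Algebra k A] {n : ℕ} [NeZero n]

/-- The convolution product on `Hom_Alg(a(A), k) = G(a(A)^o)`, defined via the
comultiplication `Δ` of `a(A)`. -/
def conv (e : Module.Basis (Fin n) k A) (Δ : aA k e →ₐ[k] aA k e ⊗[k] aA k e)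
    (θ₁ θ₂ : aA k e →ₐ[k] k) : aA k e →ₐ[k] k :=
  (Algebra.TensorProduct.lmul' k (S := k)).comp ((Algebra.TensorProduct.map θ₁ θ₂).comp Δ)

/-- The convolution product on the algebra `Hom(a(A), k[G])` of linear maps. -/
def lconv (e : Module.Basis (Fin n) k A) (Δ : aA k e →ₐ[k] aA k e ⊗[k] aA k e)
    {L : Type} [Ring L] [Algebra k L]
    (f h : aA k e →ₗ[k] L) : aA k e →ₗ[k] L :=
  (LinearMap.mul' k L).comp ((TensorProduct.map f h).comp Δ.toLinearMap)

/-- The embedding `a(A)^o ⊆ Hom(a(A), k) → Hom(a(A), k[G])` induced by `k ⊆ k[G]`. -/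
def emb (e : Module.Basis (Fin n) k A) {L : Type} [Ring L] [Algebra k L]
    (g : aA k e →ₐ[k] k) : aA k e →ₗ[k] L :=
  (Algebra.linearMap k L).comp g.toLinearMap

/-- Auxiliary: coefficients in a basis expansion of a tensor are unique. -/
lemma tmul_basis_inj {k : Type} [Field k] {A M : Type} [AddCommGroup A] [Module k A]
    [AddCommGroup M] [Module k M] {n : ℕ} (e : Module.Basis (Fin n) k A)
    (c d : Fin n → M) (h : (∑ t, e t ⊗ₜ[k] c t) = ∑ t, e t ⊗ₜ[k] d t) (t : Fin n) :
    c t = d t := by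
  have hval : ∀ (c : Fin n → M) t,
      (TensorProduct.finsuppScalarLeft k M (Fin n))
        ((TensorProduct.congr e.repr (LinearEquiv.refl k M)) (∑ u, e u ⊗ₜ[k] c u)) t = c t := by
    intro c t
    rw [map_sum, map_sum]
    simp [TensorProduct.congr_tmul, TensorProduct.finsuppScalarLeft_apply_tmul_apply,
      Module.Basis.repr_self, Finsupp.single_apply]
  rw [← hval c t, ← hval d t, h]

/-- For gradings given by bialgebra maps `θ₁, θ₂ : a(A) → k[G]` and an
invertible group-like `g` of `a(A)^o` with associated automorphism
`w_g(e_i) = ∑ s g(x_{si}) e_s`, the map `w_g` is a morphism of right `k[G]`-comodules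
from `(A, ρ^{(θ₁)})` to `(A, ρ^{(θ₂)})` iff `g ⋆ θ₁ = θ₂ ⋆ g` in `Hom(a(A), k[G])`. -/
theorem comodule_map_iff_convolution
    (e : Module.Basis (Fin n) k A) (he : e 0 = 1)
    (Δ : aA k e →ₐ[k] aA k e ⊗[k] aA k e) (ε : aA k e →ₐ[k] k)
    (hΔ : ∀ i j, Δ (xg k e i j) = ∑ s, xg k e i s ⊗ₜ[k] xg k e s j)
    (hε : ∀ i j, ε (xg k e i j) = if i = j then 1 else 0)
    (G : Type) [Group G]
    (θ₁ θ₂ : aA k e →ₐ[k] MonoidAlgebra k G)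
    (hθ₁ : (∀ z, TensorProduct.map θ₁.toLinearMap θ₁.toLinearMap (Δ z) = gComul k G (θ₁ z)) ∧
      ∀ z, gCounit k G (θ₁ z) = ε z)
    (hθ₂ : (∀ z, TensorProduct.map θ₂.toLinearMap θ₂.toLinearMap (Δ z) = gComul k G (θ₂ z)) ∧
      ∀ z, gCounit k G (θ₂ z) = ε z)
    (g g' : aA k e →ₐ[k] k) (hg : conv k e Δ g g' = ε ∧ conv k e Δ g' g = ε)
    -- the associated automorphism `w_g(e_i) = ∑ s g(x_{si}) e_s`
    (w : A →ₗ[k] A) (hw : ∀ i, w (e i) = ∑ s, g (xg k e s i) • e s) :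
    -- `w_g` is a `k[G]`-comodule map `(A, ρ^{(θ₁)}) → (A, ρ^{(θ₂)})` ...
    (∀ x : A,
        TensorProduct.map LinearMap.id θ₂.toLinearMap (etaA k e (w x)) =
          TensorProduct.map w LinearMap.id
            (TensorProduct.map LinearMap.id θ₁.toLinearMap (etaA k e x))) ↔
    -- ... iff `g ⋆ θ₁ = θ₂ ⋆ g` in the convolution algebra `Hom(a(A), k[G])`
    lconv k e Δ (emb k e g) θ₁.toLinearMap = lconv k e Δ θ₂.toLinearMap (emb k e g) := by
  classical
  -- the convolutions packaged as algebra homomorphisms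
  set F₁ : aA k e →ₐ[k] MonoidAlgebra k G :=
    θ₁.comp ((Algebra.TensorProduct.lid k (aA k e)).toAlgHom.comp
      ((Algebra.TensorProduct.map g (AlgHom.id k (aA k e))).comp Δ)) with hF₁def
  set F₂ : aA k e →ₐ[k] MonoidAlgebra k G :=
    θ₂.comp ((Algebra.TensorProduct.rid k k (aA k e)).toAlgHom.comp
      ((Algebra.TensorProduct.map (AlgHom.id k (aA k e)) g).comp Δ)) with hF₂def
  have key₁ : ∀ y : aA k e ⊗[k] aA k e,
      (LinearMap.mul' k (MonoidAlgebra k G))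
          (TensorProduct.map (emb k e g) θ₁.toLinearMap y)
        = θ₁ ((Algebra.TensorProduct.lid k (aA k e))
            ((Algebra.TensorProduct.map g (AlgHom.id k (aA k e))) y)) := by
    intro y
    induction y using TensorProduct.induction_on with
    | zero => simp
    | tmul a b =>
        simp [emb, Algebra.smul_def]
    | add x y hx hy => simp [map_add, hx, hy]
  have key₂ : ∀ y : aA k e ⊗[k] aA k e,
      (LinearMap.mul' k (MonoidAlgebra k G))
          (TensorProduct.map θ₂.toLinearMap (emb k e g) y)
        = θ₂ ((Algebra.TensorProduct.rid k k (aA k e))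
            ((Algebra.TensorProduct.map (AlgHom.id k (aA k e)) g) y)) := by
    intro y
    induction y using TensorProduct.induction_on with
    | zero => simp
    | tmul a b =>
        simp [emb, Algebra.smul_def, Algebra.commutes]
    | add x y hx hy => simp [map_add, hx, hy]
  have hE₁ : ∀ z, lconv k e Δ (emb k e g) θ₁.toLinearMap z = F₁ z := by
    intro z
    simp only [lconv, LinearMap.comp_apply, AlgHom.toLinearMap_apply, hF₁def,
      AlgHom.comp_apply, AlgEquiv.toAlgHom_eq_coe, AlgHom.coe_coe]
    exact key₁ (Δ z)
  have hE₂ : ∀ z, lconv k e Δ θ₂.toLinearMap (emb k e g) z = F₂ z := by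
    intro z
    simp only [lconv, LinearMap.comp_apply, AlgHom.toLinearMap_apply, hF₂def,
      AlgHom.comp_apply, AlgEquiv.toAlgHom_eq_coe, AlgHom.coe_coe]
    exact key₂ (Δ z)
  have hF₁x : ∀ t i, F₁ (xg k e t i) = ∑ s, g (xg k e t s) • θ₁ (xg k e s i) := by
    intro t i
    simp [hF₁def, hΔ, map_sum]
  have hF₂x : ∀ t i, F₂ (xg k e t i) = ∑ s, g (xg k e s i) • θ₂ (xg k e t s) := by
    intro t i
    simp [hF₂def, hΔ, map_sum]
  -- computing the two sides of the comodule condition on basis elements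
  have hL : ∀ i, TensorProduct.map LinearMap.id θ₂.toLinearMap (etaA k e (w (e i))) =
      ∑ t, e t ⊗ₜ[k] F₂ (xg k e t i) := by
    intro i
    rw [hw i]
    simp only [map_sum, map_smul, etaA, Module.Basis.constr_basis, TensorProduct.map_tmul,
      LinearMap.id_coe, id_eq, AlgHom.toLinearMap_apply, Finset.smul_sum,
      TensorProduct.tmul_smul, hF₂x, TensorProduct.tmul_sum]
    exact Finset.sum_comm
  have hR : ∀ i, TensorProduct.map w LinearMap.id
      (TensorProduct.map LinearMap.id θ₁.toLinearMap (etaA k e (e i))) =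
      ∑ t, e t ⊗ₜ[k] F₁ (xg k e t i) := by
    intro i
    simp only [etaA, Module.Basis.constr_basis, map_sum, TensorProduct.map_tmul,
      LinearMap.id_coe, id_eq, AlgHom.toLinearMap_apply, hw, TensorProduct.sum_tmul,
      TensorProduct.smul_tmul, TensorProduct.tmul_smul, hF₁x, TensorProduct.tmul_sum]
    exact Finset.sum_comm
  -- injectivity of t ↦ ∑ e t ⊗ c t
  have hinj : ∀ (c d : Fin n → MonoidAlgebra k G),
      (∑ t, e t ⊗ₜ[k] c t) = (∑ t, e t ⊗ₜ[k] d t) → ∀ t, c t = d t :=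
    fun c d h t => tmul_basis_inj e c d h t
  constructor
  · intro h
    have hgen : ∀ t i, F₁ (xg k e t i) = F₂ (xg k e t i) := by
      intro t i
      have h' := h (e i)
      rw [hL, hR] at h'
      exact hinj _ _ h'.symm t
    have hF : F₁ = F₂ := by
      apply RingQuot.ringQuot_ext'
      apply FreeAlgebra.hom_ext
      funext p
      simpa [xg] using hgen p.1 p.2
    ext z
    rw [hE₁ z, hE₂ z, hF]
  · intro h x
    have hgen : ∀ t i, F₁ (xg k e t i) = F₂ (xg k e t i) := by
      intro t i
      have := LinearMap.congr_fun h (xg k e t i)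
      rwa [hE₁, hE₂] at this
    have hx : x = ∑ i, e.repr x i • e i := (e.sum_repr x).symm
    rw [hx]
    simp only [map_sum, map_smul]
    refine Finset.sum_congr rfl fun i _ => ?_
    congr 1
    rw [hL i, hR i]
    exact Finset.sum_congr rfl fun t _ => by rw [hgen t i]

end
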